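/- arXiv:2003.13310 — 2 statements merged into one kernel-verified Lean document; each statement's English description precedes it below -/
import Mathlib

section
/- Suppose the reference channel $Z^*$ has positive distance from the lateral boundary of the cell $Z$. Then the averaging operator $\mathcal{U}_\epsilon$ maps $L^2((0,T)\times\Sigma,H^1(Z^*))$ into $L^2((0,T),H^1(\Omega^M_{*,\epsilon}))$, and for every $\phi\in L^2((0,T)\times\Sigma,H^1(Z^*))$ it holds that $\epsilon\nabla\,\mathcal{U}_\epsilon(\phi)=\mathcal{U}_\epsilon(\nabla_y\phi)$. -/
open MeasureTheory Set ENNReal Filter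

noncomputable section

abbrev Em (m : ℕ) : Type := (Fin m → ℝ) × ℝ

/-- The reference base cell `Y = (0,1)^{n-1}`. -/
def cellY (m : ℕ) : Set (Fin m → ℝ) := Set.pi Set.univ fun _ => Ioo (0:ℝ) 1

/-- The reference cell `Z = Y × (-1,1)`. -/
def cellZ (m : ℕ) : Set (Em m) := (cellY m) ×ˢ (Ioo (-1:ℝ) 1)

/-- The map `y ↦ ε (y + (k̄, 0))`. -/
def cellMap {m : ℕ} (ε : ℝ) (k : Fin m → ℤ) (y : Em m) : Em m :=
  (fun i => ε * (y.1 i + (k i : ℝ)), ε * y.2)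

/-- Indices of cells completely contained in the layer `Σ × (-ε,ε)`. -/
def cellIdx {m : ℕ} (ε : ℝ) (Sig : Set (Fin m → ℝ)) : Set (Fin m → ℤ) :=
  {k | cellMap ε k '' (cellZ m) ⊆ Sig ×ˢ (Ioo (-ε) ε)}

/-- The channel array `Ω^M_{*,ε}`. -/
def channelArray {m : ℕ} (ε : ℝ) (Sig : Set (Fin m → ℝ)) (Zs : Set (Em m)) : Set (Em m) :=
  ⋃ k ∈ cellIdx ε Sig, cellMap ε k '' Zs

/-- Top face `S_*^+` of the reference channel. -/
def SplusF {m : ℕ} (Zs : Set (Em m)) : Set (Em m) := {y | y ∈ frontier Zs ∧ y.2 = 1}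
/-- Bottom face `S_*^-` of the reference channel. -/
def SminusF {m : ℕ} (Zs : Set (Em m)) : Set (Em m) := {y | y ∈ frontier Zs ∧ y.2 = -1}
/-- Lateral boundary `N` of the reference channel. -/
def latBd {m : ℕ} (Zs : Set (Em m)) : Set (Em m) :=
  frontier Zs \ (SplusF Zs ∪ SminusF Zs)

/-- The union `N_ε` of the lateral boundaries of the channels. -/
def latArray {m : ℕ} (ε : ℝ) (Sig : Set (Fin m → ℝ)) (Zs : Set (Em m)) : Set (Em m) :=
  ⋃ k ∈ cellIdx ε Sig, cellMap ε k '' (latBd Zs)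

/-- Union of the top/bottom interfaces `S^±_{*,ε}`. -/
def topBotArray {m : ℕ} (ε : ℝ) (Sig : Set (Fin m → ℝ)) (Zs : Set (Em m)) : Set (Em m) :=
  ⋃ k ∈ cellIdx ε Sig, cellMap ε k '' (SplusF Zs ∪ SminusF Zs)

/-- `ε > 0` and `ε⁻¹ ∈ ℕ`. -/
def admissibleEps (ε : ℝ) : Prop := 0 < ε ∧ ∃ j : ℕ, 0 < j ∧ ε * j = 1

/-- Euclidean dot product of two (continuous linear) functionals on `Em m`,
identified with their gradient vectors. -/
def dotCLM {m : ℕ} (f g : Em m →L[ℝ] ℝ) : ℝ :=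
  (∑ i : Fin m, f (Pi.single i 1, 0) * g (Pi.single i 1, 0)) + f (0, 1) * g (0, 1)

/-- Euclidean dot product on `Em m`. -/
def dotEm {m : ℕ} (a b : Em m) : ℝ := (∑ i : Fin m, a.1 i * b.1 i) + a.2 * b.2

/-- Componentwise floor of `x̄/ε`. -/
def floorVec {m : ℕ} (ε : ℝ) (x : Fin m → ℝ) : Fin m → ℤ := fun i => ⌊x i / ε⌋

/-- The unfolding operator for thin channels:
`(𝒯_ε v)(t, x̄, y) = v (t, ε([x̄/ε],0) + ε y)`. -/
def unfoldOp {m : ℕ} (ε : ℝ) (v : ℝ × Em m → ℝ) : ℝ × ((Fin m → ℝ) × Em m) → ℝ :=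
  fun p => v (p.1, cellMap ε (floorVec ε p.2.1) p.2.2)

/-- `x ↦ x/ε`. -/
def scaleInv {m : ℕ} (ε : ℝ) (x : Em m) : Em m := (fun i => x.1 i / ε, x.2 / ε)

/-- The explicit averaging formula
`𝒰_ε(φ)(t,x) = ∫_Y φ(t, ε(z̄+[x̄/ε]), ({x̄/ε}, xₙ/ε)) dz̄`. -/
def avgOp (m : ℕ) (ε : ℝ) (φ : ℝ × ((Fin m → ℝ) × Em m) → ℝ) : ℝ × Em m → ℝ :=
  fun x => ∫ zb in cellY m,
    φ (x.1, ((fun i => ε * (zb i + (⌊x.2.1 i / ε⌋ : ℤ))),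
             ((fun i => Int.fract (x.2.1 i / ε)), x.2.2 / ε)))

/-! On the cell `ε(Z + (k̄, 0))` the floor and the fractional part in the averaging formula are
`k̄` and `x̄/ε - k̄`, so near `ε(y + (k̄, 0))` the function `𝒰_ε(φ)(t, ·)` is
`w ↦ ∫_Y φ(t, ε(z̄ + k̄), w) dz̄` composed with the affine map `x ↦ x/ε - (k̄, 0)`, whose
derivative is `ε⁻¹`. Differentiating under the integral sign (the `y`-gradient of `φ` is
bounded) and the chain rule give `ε ∇𝒰_ε(φ) = 𝒰_ε(∇_y φ)`. Square integrability holds because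
`𝒰_ε(φ)(t, ·)` is bounded by the bound of `φ` on a bounded set, and the channel array lies in
the bounded layer `Σ × (-ε, ε)`. -/

open Topology

section ParametricIntegral

variable {P E : Type*} [TopologicalSpace P] [MeasurableSpace P] [OpensMeasurableSpace P]
  [NormedAddCommGroup E] [NormedSpace ℝ E] [FiniteDimensional ℝ E]

theorem aestronglyMeasurable_fderiv_of_continuous_uncurry {ψ : P → E → ℝ}
    (hψ : Continuous (Function.uncurry ψ)) (y : E) (μ : Measure P) :
    AEStronglyMeasurable (fun a => fderiv ℝ (ψ a) y) μ := by
  borelize E (E →L[ℝ] ℝ)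
  exact ((measurable_fderiv_with_param ℝ hψ).comp
    (measurable_id.prodMk measurable_const)).aestronglyMeasurable

theorem hasFDerivAt_integral_of_continuous_of_norm_fderiv_le {μ : Measure P} [IsFiniteMeasure μ]
    {ψ : P → E → ℝ} (hψ : Continuous (Function.uncurry ψ)) {U : Set E} (hU : IsOpen U)
    {y : E} (hy : y ∈ U) (hint : Integrable (ψ · y) μ)
    (hdiff : ∀ a, ∀ w ∈ U, DifferentiableAt ℝ (ψ a) w) {M : ℝ}
    (hbd : ∀ a, ∀ w ∈ U, ‖fderiv ℝ (ψ a) w‖ ≤ M) :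
    HasFDerivAt (fun w => ∫ a, ψ a w ∂μ) (∫ a, fderiv ℝ (ψ a) y ∂μ) y :=
  hasFDerivAt_integral_of_dominated_of_fderiv_le (F := fun w a => ψ a w) (bound := fun _ => M)
    (hU.mem_nhds hy)
    (Eventually.of_forall fun _ =>
      (hψ.comp (continuous_id.prodMk continuous_const)).aestronglyMeasurable)
    hint (aestronglyMeasurable_fderiv_of_continuous_uncurry hψ y μ)
    (ae_of_all _ hbd) (integrable_const M)
    (ae_of_all _ fun a w hw => (hdiff a w hw).hasFDerivAt)

end ParametricIntegral

namespace ChannelCell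

variable {m : ℕ}

def cellShift (k : Fin m → ℤ) : Em m := (fun i => (k i : ℝ), 0)

def cellMapInv (ε : ℝ) (k : Fin m → ℤ) (x : Em m) : Em m := ε⁻¹ • x - cellShift k

lemma cellMap_eq_smul (ε : ℝ) (k : Fin m → ℤ) (y : Em m) :
    cellMap ε k y = ε • (y + cellShift k) := by
  ext <;> simp [cellMap, cellShift, mul_add]

lemma cellMapInv_cellMap {ε : ℝ} (hε : ε ≠ 0) (k : Fin m → ℤ) (y : Em m) :
    cellMapInv ε k (cellMap ε k y) = y := by
  simp [cellMapInv, cellMap_eq_smul, smul_smul, inv_mul_cancel₀ hε]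

lemma cellMap_cellMapInv {ε : ℝ} (hε : ε ≠ 0) (k : Fin m → ℤ) (x : Em m) :
    cellMap ε k (cellMapInv ε k x) = x := by
  simp [cellMapInv, cellMap_eq_smul, smul_smul, mul_inv_cancel₀ hε]

lemma image_cellMap {ε : ℝ} (hε : ε ≠ 0) (k : Fin m → ℤ) (S : Set (Em m)) :
    cellMap ε k '' S = cellMapInv ε k ⁻¹' S :=
  congrFun (image_eq_preimage_of_inverse (cellMapInv_cellMap hε k) (cellMap_cellMapInv hε k)) S

lemma hasFDerivAt_cellMapInv (ε : ℝ) (k : Fin m → ℤ) (x : Em m) :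
    HasFDerivAt (cellMapInv ε k) (ε⁻¹ • ContinuousLinearMap.id ℝ (Em m)) x :=
  ((hasFDerivAt_id x).const_smul ε⁻¹).sub_const _

lemma continuous_cellMapInv (ε : ℝ) (k : Fin m → ℤ) : Continuous (cellMapInv ε k) :=
  continuous_iff_continuousAt.2 fun x => (hasFDerivAt_cellMapInv ε k x).continuousAt

lemma floor_div_cellMap {ε : ℝ} (hε : ε ≠ 0) (k : Fin m → ℤ) {y : Em m} (hy : y.1 ∈ cellY m)
    (i : Fin m) : ⌊(cellMap ε k y).1 i / ε⌋ = k i := by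
  have hyi := hy i (mem_univ i)
  rw [cellMap, mul_div_cancel_left₀ _ hε, Int.floor_add_intCast,
    Int.floor_eq_zero_iff.2 ⟨hyi.1.le, hyi.2⟩, zero_add]

lemma fract_div_cellMap {ε : ℝ} (hε : ε ≠ 0) (k : Fin m → ℤ) {y : Em m} (hy : y.1 ∈ cellY m)
    (i : Fin m) : Int.fract ((cellMap ε k y).1 i / ε) = y.1 i := by
  have hyi := hy i (mem_univ i)
  rw [cellMap, mul_div_cancel_left₀ _ hε, Int.fract_add_intCast,
    Int.fract_eq_self.2 ⟨hyi.1.le, hyi.2⟩]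

lemma avgOp_cellMap {ε : ℝ} (hε : ε ≠ 0) (φ : ℝ × ((Fin m → ℝ) × Em m) → ℝ) (t : ℝ)
    (k : Fin m → ℤ) {y : Em m} (hy : y.1 ∈ cellY m) :
    avgOp m ε φ (t, cellMap ε k y)
      = ∫ zb in cellY m, φ (t, (fun i => ε * (zb i + (k i : ℝ))), y) := by
  have hsnd : (cellMap ε k y).2 / ε = y.2 := mul_div_cancel_left₀ _ hε
  simp only [avgOp, floor_div_cellMap hε k hy, fract_div_cellMap hε k hy, hsnd]

lemma avgOp_eventuallyEq_comp_cellMapInv {ε : ℝ} (hε : ε ≠ 0)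
    (φ : ℝ × ((Fin m → ℝ) × Em m) → ℝ) (t : ℝ) (k : Fin m → ℤ) {y : Em m}
    (hy : y.1 ∈ cellY m) :
    (fun x => avgOp m ε φ (t, x)) =ᶠ[𝓝 (cellMap ε k y)]
      fun x => ∫ zb in cellY m, φ (t, (fun i => ε * (zb i + (k i : ℝ))), cellMapInv ε k x) := by
  have hopen : IsOpen (cellMap ε k '' (Prod.fst ⁻¹' cellY m)) := by
    rw [image_cellMap hε]
    exact ((isOpen_set_pi finite_univ fun _ _ => isOpen_Ioo).preimage continuous_fst).preimage
      (continuous_cellMapInv ε k)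
  filter_upwards [hopen.mem_nhds (mem_image_of_mem _ hy)]
  rintro _ ⟨w, hw, rfl⟩
  rw [avgOp_cellMap hε φ t k hw, cellMapInv_cellMap hε]

lemma volume_cellY : volume (cellY m) = 1 := by
  simp [cellY, Real.volume_pi_Ioo]

instance : IsFiniteMeasure (volume.restrict (cellY m)) :=
  isFiniteMeasure_restrict.2 (by simp [volume_cellY])

lemma cellY_subset_Icc : cellY m ⊆ Icc 0 1 :=
  fun _ hz => ⟨fun i => (hz i (mem_univ i)).1.le, fun i => (hz i (mem_univ i)).2.le⟩

lemma integrableOn_cellY {f : (Fin m → ℝ) → ℝ} (hf : Continuous f) : IntegrableOn f (cellY m) :=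
  hf.integrableOn_Icc.mono_set cellY_subset_Icc

theorem hasFDerivAt_avgOp_cellMap {ε : ℝ} (hε : ε ≠ 0) {φ : ℝ × ((Fin m → ℝ) × Em m) → ℝ}
    (hφ : Continuous φ) (t : ℝ) (k : Fin m → ℤ) {U : Set (Em m)} (hU : IsOpen U)
    (hdiff : ∀ xb, ∀ w ∈ U, DifferentiableAt ℝ (fun y' => φ (t, xb, y')) w) {M : ℝ}
    (hbd : ∀ xb, ∀ w ∈ U, ‖fderiv ℝ (fun y' => φ (t, xb, y')) w‖ ≤ M)
    {y : Em m} (hyU : y ∈ U) (hyY : y.1 ∈ cellY m) :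
    HasFDerivAt (fun x => avgOp m ε φ (t, x))
      ((∫ zb in cellY m, fderiv ℝ (fun y' => φ (t, (fun i => ε * (zb i + (k i : ℝ))), y')) y).comp
        (ε⁻¹ • ContinuousLinearMap.id ℝ (Em m)))
      (cellMap ε k y) := by
  set ψ : (Fin m → ℝ) → Em m → ℝ := fun zb w => φ (t, (fun i => ε * (zb i + (k i : ℝ))), w)
  have hψ : Continuous (Function.uncurry ψ) := by fun_prop
  have hG : HasFDerivAt (fun w => ∫ zb in cellY m, ψ zb w)
      (∫ zb in cellY m, fderiv ℝ (ψ zb) y) (cellMapInv ε k (cellMap ε k y)) := by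
    rw [cellMapInv_cellMap hε k y]
    exact hasFDerivAt_integral_of_continuous_of_norm_fderiv_le hψ hU hyU
      (integrableOn_cellY (by fun_prop)) (fun _ => hdiff _) (fun _ => hbd _)
  exact (hG.comp (cellMap ε k y) (hasFDerivAt_cellMapInv ε k _)).congr_of_eventuallyEq
    (avgOp_eventuallyEq_comp_cellMapInv hε φ t k hyY)

lemma measurableSet_channelArray {ε : ℝ} (hε : ε ≠ 0) (Sig : Set (Fin m → ℝ))
    {Zs : Set (Em m)} (hZs : MeasurableSet Zs) : MeasurableSet (channelArray ε Sig Zs) :=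
  .biUnion (to_countable _) fun k _ => by
    rw [image_cellMap hε]
    exact (continuous_cellMapInv ε k).measurable hZs

lemma channelArray_subset {ε : ℝ} {Sig : Set (Fin m → ℝ)} {Zs : Set (Em m)}
    (hZs : Zs ⊆ cellZ m) : channelArray ε Sig Zs ⊆ Sig ×ˢ Ioo (-ε) ε :=
  iUnion₂_subset fun _ hk => (image_mono hZs).trans hk

lemma mem_of_mem_cellIdx {ε : ℝ} {Sig : Set (Fin m → ℝ)} {k : Fin m → ℤ}
    (hk : k ∈ cellIdx ε Sig) {zb : Fin m → ℝ} (hzb : zb ∈ cellY m) :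
    (fun i => ε * (zb i + (k i : ℝ))) ∈ Sig :=
  (hk ⟨(zb, 0), ⟨hzb, by norm_num⟩, rfl⟩).1

lemma isBounded_cellZ : Bornology.IsBounded (cellZ m) :=
  ((Metric.isBounded_Icc 0 1).subset cellY_subset_Icc).prod (Metric.isBounded_Ioo _ _)

lemma stronglyMeasurable_avgOp (ε : ℝ) {φ : ℝ × ((Fin m → ℝ) × Em m) → ℝ}
    (hφ : Measurable φ) : StronglyMeasurable (avgOp m ε φ) :=
  (hφ.comp (by fun_prop)).stronglyMeasurable.integral_prod_right'
    (f := fun p : (ℝ × Em m) × (Fin m → ℝ) =>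
      φ (p.1.1, (fun i => ε * (p.2 i + ⌊p.1.2.1 i / ε⌋)),
        ((fun i => Int.fract (p.1.2.1 i / ε)), p.1.2.2 / ε)))

lemma exists_norm_avgOp_le_on_channelArray {ε : ℝ} (hε : ε ≠ 0) {Sig : Set (Fin m → ℝ)}
    (hSig : Bornology.IsBounded Sig) {Zs : Set (Em m)} (hZs : Zs ⊆ cellZ m)
    {φ : ℝ × ((Fin m → ℝ) × Em m) → ℝ} (hφ : Continuous φ) (t : ℝ) :
    ∃ C, ∀ x ∈ channelArray ε Sig Zs, ‖avgOp m ε φ (t, x)‖ ≤ C := by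
  have hK : Bornology.IsBounded (({t} : Set ℝ) ×ˢ Sig ×ˢ cellZ m) :=
    Bornology.isBounded_singleton.prod (hSig.prod isBounded_cellZ)
  obtain ⟨C, hC⟩ := hK.isCompact_closure.exists_bound_of_continuousOn hφ.continuousOn
  refine ⟨C, fun x hx => ?_⟩
  obtain ⟨k, hk, w, hw, rfl⟩ := mem_iUnion₂.1 hx
  rw [avgOp_cellMap hε φ t k (hZs hw).1]
  calc _ ≤ C * volume.real (cellY m) := norm_setIntegral_le_of_norm_le_const
          (by simp [volume_cellY]) fun zb hzb =>
            hC (t, _, w) (subset_closure ⟨rfl, mem_of_mem_cellIdx hk hzb, hZs hw⟩)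
    _ = C := by simp [Measure.real, volume_cellY]

theorem memLp_avgOp_channelArray {ε : ℝ} (hε : ε ≠ 0) {Sig : Set (Fin m → ℝ)}
    (hSig : Bornology.IsBounded Sig) {Zs : Set (Em m)} (hZsMeas : MeasurableSet Zs)
    (hZs : Zs ⊆ cellZ m) {φ : ℝ × ((Fin m → ℝ) × Em m) → ℝ} (hφ : Continuous φ) (t : ℝ)
    (p : ℝ≥0∞) :
    MemLp (fun x => avgOp m ε φ (t, x)) p (volume.restrict (channelArray ε Sig Zs)) := by
  have : IsFiniteMeasure (volume.restrict (channelArray ε Sig Zs)) :=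
    isFiniteMeasure_restrict.2 ((measure_mono (channelArray_subset hZs)).trans_lt
      (hSig.prod (Metric.isBounded_Ioo _ _)).measure_lt_top).ne
  obtain ⟨C, hC⟩ := exists_norm_avgOp_le_on_channelArray hε hSig hZs hφ t
  exact .of_bound ((stronglyMeasurable_avgOp ε hφ.measurable).comp_measurable
      measurable_prodMk_left).aestronglyMeasurable C
    (ae_restrict_of_forall_mem (measurableSet_channelArray hε Sig hZsMeas) hC)

end ChannelCell

open ChannelCell in
theorem averaging_operator_gradient_general
    (m : ℕ) (ε : ℝ) (hε : admissibleEps ε)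
    (Sig : Set (Fin m → ℝ)) (hSigBdd : Bornology.IsBounded Sig)
    (Zs : Set (Em m)) (hZsOpen : IsOpen Zs) (hZsSub : Zs ⊆ cellZ m)
    (φ : ℝ × ((Fin m → ℝ) × Em m) → ℝ)
    (hφcont : Continuous φ)
    (hφdiff : ∀ (t : ℝ) (xb : Fin m → ℝ), ∀ y ∈ Zs,
      DifferentiableAt ℝ (fun y' => φ (t, xb, y')) y)
    (M : ℝ)
    (hφbd : ∀ (t : ℝ) (xb : Fin m → ℝ) (y wv : Em m),
      ‖fderiv ℝ (fun y' => φ (t, xb, y')) y wv‖ ≤ M * ‖wv‖) :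
    ∀ t : ℝ, ∀ k ∈ cellIdx ε Sig, ∀ y ∈ Zs,
      DifferentiableAt ℝ (fun x => avgOp m ε φ (t, x)) (cellMap ε k y) ∧
      MemLp (fun x => avgOp m ε φ (t, x)) 2 (volume.restrict (channelArray ε Sig Zs)) ∧
      ∀ wv : Em m,
        ε * fderiv ℝ (fun x => avgOp m ε φ (t, x)) (cellMap ε k y) wv
          = ∫ zb in cellY m,
              fderiv ℝ (fun y' => φ (t, (fun i => ε * (zb i + (k i : ℝ))), y')) y wv := by
  intro t k _ y hy
  have hε0 : ε ≠ 0 := hε.1.ne'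
  have hopNorm : ∀ xb w, ‖fderiv ℝ (fun y' => φ (t, xb, y')) w‖ ≤ max M 0 := fun xb w =>
    ContinuousLinearMap.opNorm_le_bound _ (le_max_right M 0) fun wv =>
      (hφbd t xb w wv).trans (mul_le_mul_of_nonneg_right (le_max_left M 0) (norm_nonneg wv))
  have hD := hasFDerivAt_avgOp_cellMap hε0 hφcont t k hZsOpen (hφdiff t)
    (fun xb w _ => hopNorm xb w) hy (hZsSub hy).1
  refine ⟨hD.differentiableAt,
    memLp_avgOp_channelArray hε0 hSigBdd hZsOpen.measurableSet hZsSub hφcont t 2, fun wv => ?_⟩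
  have hint : Integrable
      (fun zb => fderiv ℝ (fun y' => φ (t, (fun i => ε * (zb i + (k i : ℝ))), y')) y)
      (volume.restrict (cellY m)) :=
    .of_bound (aestronglyMeasurable_fderiv_of_continuous_uncurry (by fun_prop) y _) _
      (ae_of_all _ fun zb => hopNorm _ y)
  rw [hD.fderiv, ContinuousLinearMap.comp_apply, smul_apply,
    ContinuousLinearMap.id_apply, map_smul, smul_eq_mul, ← mul_assoc, mul_inv_cancel₀ hε0,
    one_mul, ContinuousLinearMap.integral_apply hint]

/-- the averaging operator maps `L²((0,T)×Σ,H¹(Z^*))` into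
`L²((0,T),H¹(Ω^M_{*,ε}))` and `ε ∇ 𝒰_ε(φ) = 𝒰_ε(∇_y φ)`: provided the reference
channel `Z^*` has positive distance to the lateral boundary of `Z`, at every point
`x = cellMap ε k y` of a channel cell the averaged function is differentiable and its
scaled gradient is the average of the `y`-gradient of `φ`. -/
theorem averaging_operator_gradient
    (m : ℕ) (T ε : ℝ) (hT : 0 < T) (hε : admissibleEps ε)
    (Sig : Set (Fin m → ℝ)) (hSigOpen : IsOpen Sig) (hSigBdd : Bornology.IsBounded Sig)
    (Zs : Set (Em m)) (hZsOpen : IsOpen Zs) (hZsSub : Zs ⊆ cellZ m)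
    (hdist : ∃ d > (0:ℝ), ∀ y ∈ latBd Zs, ∀ z ∈ latBd (cellZ m), d ≤ dist y z)
    (φ : ℝ × ((Fin m → ℝ) × Em m) → ℝ)
    (hφcont : Continuous φ)
    (hφdiff : ∀ (t : ℝ) (xb : Fin m → ℝ), ∀ y ∈ Zs,
      DifferentiableAt ℝ (fun y' => φ (t, xb, y')) y)
    (M : ℝ)
    (hφbd : ∀ (t : ℝ) (xb : Fin m → ℝ) (y wv : Em m),
      ‖fderiv ℝ (fun y' => φ (t, xb, y')) y wv‖ ≤ M * ‖wv‖) :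
    ∀ t : ℝ, ∀ k ∈ cellIdx ε Sig, ∀ y ∈ Zs,
      DifferentiableAt ℝ (fun x => avgOp m ε φ (t, x)) (cellMap ε k y) ∧
      MemLp (fun x => avgOp m ε φ (t, x)) 2 (volume.restrict (channelArray ε Sig Zs)) ∧
      ∀ wv : Em m,
        ε * fderiv ℝ (fun x => avgOp m ε φ (t, x)) (cellMap ε k y) wv
          = ∫ zb in cellY m,
              fderiv ℝ (fun y' => φ (t, (fun i => ε * (zb i + (k i : ℝ))), y')) y wv :=
  averaging_operator_gradient_general m ε hε Sig hSigBdd Zs hZsOpen hZsSub φ hφcont hφdiff M hφbd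
end
end

section
/- For all $\phi_\epsilon\in L^2((0,T)\times\Omega^M_{*,\epsilon})$ (extended by zero), all $0<h\ll1$, and all $\bar\xi\in\mathbb{R}^{n-1}$ with $|\bar\xi|\ll h$, it holds for $\epsilon$ small enough that $\|\mathcal{T}_\epsilon\phi_\epsilon(\cdot,\cdot+\bar\xi,\cdot)-\mathcal{T}_\epsilon\phi_\epsilon\|^2_{L^2((0,T)\times\Sigma_{2h}\times Z)}\le\frac{1}{\epsilon}\sum_{\bar j\in\{0,1\}^{n-1}}\|\delta_l\phi_\epsilon\|^2_{L^2((0,T)\times\widehat\Omega^M_{*,\epsilon,h})}$, where $l=l(\epsilon,\bar\xi,\bar j)=\bar j+[\bar\xi/\epsilon]\in\mathbb{Z}^{n-1}$ (identified with $(l,0)\in\mathbb{Z}^n$). -/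
open MeasureTheory Set ENNReal Filter

noncomputable section

/-- `Σ_h = {x̄ ∈ Σ : dist(∂Σ, x̄) > h}`. -/
def sigmaInner {m : ℕ} (Sig : Set (Fin m → ℝ)) (h : ℝ) : Set (Fin m → ℝ) :=
  {xb ∈ Sig | ENNReal.ofReal h < EMetric.infEdist xb Sigᶜ}

/-- The interior channel array `Ω̂^M_{*,ε,h}`, union of the full channel cells whose
base cell is contained in `Σ_h`. -/
def hatChannel {m : ℕ} (ε : ℝ) (Sig : Set (Fin m → ℝ)) (Zs : Set (Em m)) (h : ℝ) :
    Set (Em m) :=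
  channelArray ε (sigmaInner Sig h) Zs

/-- Discrete shift difference `δ_l φ(t,x) = φ(t, x + ε(l,0)) - φ(t,x)`. -/
def shiftDiff {m : ℕ} (ε : ℝ) (l : Fin m → ℤ) (φ : ℝ × Em m → ℝ) : ℝ × Em m → ℝ :=
  fun x => φ (x.1, ((fun i => x.2.1 i + ε * (l i : ℝ)), x.2.2)) - φ x

/-!
On a cell `ε(Y + k̄)` the unfolded function `𝒯_ε ψ(t, x̄, y) = ψ(t, ε(k̄ + y))` does not depend on
`x̄`, and `y ↦ ε(y + (k̄, 0))` scales volume by `ε^n` while the base cell has volume `ε^{n-1}`.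
Hence integrating `𝒯_ε ψ` over a union of full cells gives `ε⁻¹` times the integral of `ψ` over
the corresponding channels, where only `ε(k̄ + Z_*)` counts as `ψ` vanishes off the channels.
Since `[(x̄ + ξ̄)/ε] = [x̄/ε] + [ξ̄/ε] + j̄` with a carry `j̄ ∈ {0,1}^{n-1}`, the difference
`𝒯_ε φ(·, · + ξ̄, ·) - 𝒯_ε φ` equals `𝒯_ε (δ_l φ)` with `l = j̄ + [ξ̄/ε]`, and its square is at
most the sum over all `j̄`. For `ε ≤ h` every cell meeting `Σ_{2h}` lies in `Σ_h`, which puts the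
right-hand side on `Ω̂^M_{*,ε,h}`.
-/

-- `volume` on a product is not reducibly `Measure.prod`, so instance search misses this.
instance (m : ℕ) : (volume : Measure (Em m)).IsAddHaarMeasure :=
  Measure.prod.instIsAddHaarMeasure _ _

section

variable {m : ℕ}

lemma floorVec_cellMap {ε : ℝ} (hε : 0 < ε) (k : Fin m → ℤ) {y : Em m} (hy : y ∈ cellZ m) :
    floorVec ε (cellMap ε k y).1 = k := by
  funext i
  have hyi : y.1 i ∈ Ioo (0 : ℝ) 1 := hy.1 i (mem_univ i)
  rw [floorVec, cellMap, mul_div_cancel_left₀ _ hε.ne', Int.floor_add_intCast,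
    Int.floor_eq_zero_iff.2 ⟨hyi.1.le, hyi.2⟩, zero_add]

lemma cellMap_injective {ε : ℝ} (hε : ε ≠ 0) (k : Fin m → ℤ) :
    Function.Injective (cellMap ε k) := by
  intro y y' hyy'
  simp only [cellMap, Prod.mk.injEq, funext_iff, mul_right_inj' hε] at hyy'
  exact Prod.ext (funext fun i => add_right_cancel (hyy'.1 i)) hyy'.2

lemma eq_of_cellMap_eq {ε : ℝ} (hε : 0 < ε) {k k' : Fin m → ℤ} {y y' : Em m}
    (hy : y ∈ cellZ m) (hy' : y' ∈ cellZ m) (h : cellMap ε k y = cellMap ε k' y') :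
    k = k' ∧ y = y' := by
  obtain rfl : k = k' := by rw [← floorVec_cellMap hε k hy, h, floorVec_cellMap hε k' hy']
  exact ⟨rfl, cellMap_injective hε.ne' k h⟩

lemma cellMap_notMem_channelArray {ε : ℝ} (hε : 0 < ε) {Sig : Set (Fin m → ℝ)}
    {Zs : Set (Em m)} (hZs : Zs ⊆ cellZ m) (k : Fin m → ℤ) {y : Em m}
    (hy : y ∈ cellZ m \ Zs) : cellMap ε k y ∉ channelArray ε Sig Zs := by
  simp only [channelArray, mem_iUnion, mem_image, not_exists, not_and]
  intro k' _ y' hy' h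
  obtain ⟨-, rfl⟩ := eq_of_cellMap_eq hε (hZs hy') hy.1 h
  exact hy.2 hy'

lemma floorVec_preimage_singleton {ε : ℝ} (hε : 0 < ε) (k : Fin m → ℤ) :
    floorVec ε ⁻¹' {k} = Set.pi univ fun i => Ico (k i * ε) ((k i + 1) * ε) := by
  ext x
  simp [floorVec, funext_iff, Int.floor_eq_iff, le_div_iff₀ hε, div_lt_iff₀ hε]

lemma dist_cellMap_floorVec_le {ε : ℝ} (hε : 0 < ε) {y : Em m} (hy : y ∈ cellZ m)
    (x : Fin m → ℝ) : dist (cellMap ε (floorVec ε x) y).1 x ≤ ε := by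
  refine (dist_pi_le_iff hε.le).2 fun i => ?_
  have hyi : y.1 i ∈ Ioo (0 : ℝ) 1 := hy.1 i (mem_univ i)
  have hfl := Int.floor_le (x i / ε)
  have hlt := Int.lt_floor_add_one (x i / ε)
  have hdiff : (cellMap ε (floorVec ε x) y).1 i - x i
      = ε * (y.1 i + ⌊x i / ε⌋ - x i / ε) := by
    simp only [cellMap, floorVec]
    field_simp
  rw [Real.dist_eq, hdiff, abs_mul, abs_of_pos hε]
  exact mul_le_of_le_one_right hε.le (abs_le.2 ⟨by linarith [hyi.1], by linarith [hyi.2]⟩)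

lemma mem_sigmaInner_iff {Sig : Set (Fin m → ℝ)} {h : ℝ} {x : Fin m → ℝ} :
    x ∈ sigmaInner Sig h ↔ ENNReal.ofReal h < Metric.infEDist x Sigᶜ := by
  refine ⟨And.right, fun hx => ⟨?_, hx⟩⟩
  by_contra hxS
  simp [Metric.infEDist_zero_of_mem (mem_compl hxS)] at hx

lemma mem_sigmaInner_of_dist_le {Sig : Set (Fin m → ℝ)} {h δ : ℝ} (hh : 0 ≤ h) (hδ : 0 ≤ δ)
    {x z : Fin m → ℝ} (hx : x ∈ sigmaInner Sig (h + δ)) (hzx : dist z x ≤ δ) :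
    z ∈ sigmaInner Sig h := by
  rw [mem_sigmaInner_iff] at hx ⊢
  by_contra! hz
  have hxz : edist x z ≤ ENNReal.ofReal δ := by
    rw [edist_dist, dist_comm]
    exact ENNReal.ofReal_le_ofReal hzx
  have hx_le := (Metric.infEDist_le_infEDist_add_edist (x := x) (y := z) (s := Sigᶜ)).trans
    (add_le_add hz hxz)
  rw [← ENNReal.ofReal_add hh hδ] at hx_le
  exact hx.not_ge hx_le

lemma sigmaInner_subset_preimage_cellIdx {ε h c : ℝ} (hε : 0 < ε) (hh : 0 ≤ h)
    (hc : h + ε ≤ c) (Sig : Set (Fin m → ℝ)) :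
    sigmaInner Sig c ⊆ floorVec ε ⁻¹' cellIdx ε (sigmaInner Sig h) := by
  rintro x hx _ ⟨y, hy, rfl⟩
  have hx' : x ∈ sigmaInner Sig (h + ε) := by
    rw [mem_sigmaInner_iff] at hx ⊢
    exact (ENNReal.ofReal_le_ofReal hc).trans_lt hx
  refine ⟨mem_sigmaInner_of_dist_le hh hε.le hx' (dist_cellMap_floorVec_le hε hy x), ?_⟩
  have hy2 := hy.2
  simp only [cellMap, mem_Ioo] at hy2 ⊢
  constructor <;> nlinarith

def floorCarry (ε : ℝ) (ξ x : Fin m → ℝ) : Fin m → Bool :=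
  fun i => decide (⌊x i / ε⌋ + ⌊ξ i / ε⌋ < ⌊(x i + ξ i) / ε⌋)

def shiftIdx (ε : ℝ) (ξ : Fin m → ℝ) (jb : Fin m → Bool) : Fin m → ℤ :=
  fun i => (if jb i then 1 else 0) + ⌊ξ i / ε⌋

lemma floorVec_add (ε : ℝ) (ξ x : Fin m → ℝ) :
    floorVec ε (fun i => x i + ξ i) = floorVec ε x + shiftIdx ε ξ (floorCarry ε ξ x) := by
  funext i
  have hle := Int.le_floor_add (x i / ε) (ξ i / ε)
  have hge := Int.le_floor_add_floor (x i / ε) (ξ i / ε)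
  simp only [floorVec, shiftIdx, floorCarry, Pi.add_apply, decide_eq_true_eq, add_div] at *
  split_ifs <;> omega

lemma cellMap_add (ε : ℝ) (k l : Fin m → ℤ) (y : Em m) :
    (((fun i => (cellMap ε k y).1 i + ε * (l i : ℝ)), (cellMap ε k y).2) : Em m)
      = cellMap ε (k + l) y := by
  ext i
  · simp only [cellMap, Pi.add_apply, Int.cast_add]
    ring
  · rfl

lemma shiftDiff_apply_cellMap (ε : ℝ) (l k : Fin m → ℤ) (φ : ℝ × Em m → ℝ) (t : ℝ)
    (y : Em m) :
    shiftDiff ε l φ (t, cellMap ε k y) = φ (t, cellMap ε (k + l) y) - φ (t, cellMap ε k y) := by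
  rw [shiftDiff, cellMap_add]

lemma unfoldOp_shift_sub (ε : ℝ) (ξ : Fin m → ℝ) (φ : ℝ × Em m → ℝ)
    (r : ℝ × ((Fin m → ℝ) × Em m)) :
    unfoldOp ε φ (r.1, ((fun i => r.2.1 i + ξ i), r.2.2)) - unfoldOp ε φ r
      = unfoldOp ε (shiftDiff ε (shiftIdx ε ξ (floorCarry ε ξ r.2.1)) φ) r := by
  simp only [unfoldOp, shiftDiff_apply_cellMap, floorVec_add]

lemma shiftDiff_cellMap_eq_zero {ε : ℝ} (hε : 0 < ε) {Sig : Set (Fin m → ℝ)}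
    {Zs : Set (Em m)} (hZs : Zs ⊆ cellZ m) {φ : ℝ × Em m → ℝ}
    (hφ : ∀ t z, z ∉ channelArray ε Sig Zs → φ (t, z) = 0) (l k : Fin m → ℤ) (t : ℝ)
    {y : Em m} (hy : y ∈ cellZ m \ Zs) : shiftDiff ε l φ (t, cellMap ε k y) = 0 := by
  rw [shiftDiff_apply_cellMap, hφ _ _ (cellMap_notMem_channelArray hε hZs _ hy),
    hφ _ _ (cellMap_notMem_channelArray hε hZs _ hy), sub_zero]

lemma measurable_floorVec (ε : ℝ) : Measurable (floorVec (m := m) ε) := by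
  unfold floorVec
  fun_prop

@[fun_prop]
lemma measurable_cellMap (ε : ℝ) (k : Fin m → ℤ) : Measurable (cellMap (m := m) ε k) := by
  unfold cellMap
  fun_prop

lemma measurable_shiftDiff (ε : ℝ) (l : Fin m → ℤ) {φ : ℝ × Em m → ℝ}
    (hφ : Measurable φ) : Measurable (shiftDiff ε l φ) := by
  unfold shiftDiff
  fun_prop

lemma measurable_unfoldOp (ε : ℝ) {v : ℝ × Em m → ℝ} (hv : Measurable v) :
    Measurable (unfoldOp ε v) := by
  have hcast : Measurable (Int.cast : ℤ → ℝ) := measurable_of_countable _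
  unfold unfoldOp cellMap floorVec
  fun_prop

lemma measurableSet_cellZ : MeasurableSet (cellZ m) :=
  ((isOpen_set_pi finite_univ fun _ _ => isOpen_Ioo).prod isOpen_Ioo).measurableSet

lemma volume_floorVec_preimage_singleton {ε : ℝ} (hε : 0 < ε) (k : Fin m → ℤ) :
    volume (floorVec ε ⁻¹' {k}) = ENNReal.ofReal ε ^ m := by
  simp [floorVec_preimage_singleton hε, volume_pi_pi, Real.volume_Ico, add_mul]

lemma cellMap_eq_add_smul (ε : ℝ) (k : Fin m → ℤ) :
    cellMap ε k = fun y => ((fun i => ε * (k i : ℝ), 0) : Em m) + ε • y := by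
  funext y
  ext i
  · simp only [cellMap, Prod.fst_add, Prod.smul_fst, Pi.add_apply, Pi.smul_apply, smul_eq_mul]
    ring
  · simp [cellMap]

lemma measurableEmbedding_cellMap {ε : ℝ} (hε : ε ≠ 0) (k : Fin m → ℤ) :
    MeasurableEmbedding (cellMap ε k) := by
  rw [cellMap_eq_add_smul]
  exact (measurableEmbedding_addLeft _).comp (measurableEmbedding_const_smul₀ hε)

lemma map_cellMap_volume {ε : ℝ} (hε : 0 < ε) (k : Fin m → ℤ) :
    Measure.map (cellMap ε k) volume
      = (ENNReal.ofReal ε ^ (m + 1))⁻¹ • (volume : Measure (Em m)) := by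
  rw [cellMap_eq_add_smul, ← Function.comp_def (fun y : Em m => _ + y) (ε • ·),
    ← Measure.map_map (measurable_const_add _) (measurable_const_smul ε),
    Measure.map_addHaar_smul volume hε.ne', Measure.map_smul, map_add_left_eq_self]
  simp [Module.finrank_prod, abs_of_pos hε, ENNReal.ofReal_inv_of_pos, hε,
    ENNReal.ofReal_pow hε.le]

lemma setLIntegral_comp_cellMap {ε : ℝ} (hε : 0 < ε) (k : Fin m → ℤ) (s : Set (Em m))
    (F : Em m → ℝ≥0∞) :
    ∫⁻ y in s, F (cellMap ε k y)
      = (ENNReal.ofReal ε ^ (m + 1))⁻¹ * ∫⁻ z in cellMap ε k '' s, F z := by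
  have he := measurableEmbedding_cellMap hε.ne' k
  rw [← smul_eq_mul, ← lintegral_smul_measure, ← Measure.restrict_smul, ← map_cellMap_volume hε,
    he.restrict_map, he.lintegral_map, preimage_image_eq s he.injective]

lemma setLIntegral_unfold_cell {ε : ℝ} {Zs : Set (Em m)} (hε : 0 < ε)
    (hZs : MeasurableSet Zs) (hZsZ : Zs ⊆ cellZ m) (k : Fin m → ℤ) {F : Em m → ℝ≥0∞}
    (hF : Measurable F) (hF0 : ∀ y ∈ cellZ m \ Zs, F (cellMap ε k y) = 0) :
    ∫⁻ p in (floorVec ε ⁻¹' {k}) ×ˢ cellZ m, F (cellMap ε (floorVec ε p.1) p.2)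
      = (ENNReal.ofReal ε)⁻¹ * ∫⁻ z in cellMap ε k '' Zs, F z := by
  have hcell : MeasurableSet (floorVec ε ⁻¹' {k}) :=
    measurable_floorVec ε (measurableSet_singleton k)
  have hoff : ∫⁻ y in cellZ m \ Zs, F (cellMap ε k y) = 0 :=
    setLIntegral_eq_zero (measurableSet_cellZ.diff hZs) hF0
  have hε0 : ENNReal.ofReal ε ≠ 0 := (ENNReal.ofReal_pos.2 hε).ne'
  calc ∫⁻ p in (floorVec ε ⁻¹' {k}) ×ˢ cellZ m, F (cellMap ε (floorVec ε p.1) p.2)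
      = ∫⁻ p in (floorVec ε ⁻¹' {k}) ×ˢ cellZ m, F (cellMap ε k p.2) :=
        setLIntegral_congr_fun (hcell.prod measurableSet_cellZ) fun p hp => by
          rw [mem_preimage.1 hp.1]
    _ = ENNReal.ofReal ε ^ m * ∫⁻ y in cellZ m, F (cellMap ε k y) := by
        rw [Measure.volume_eq_prod, setLIntegral_prod _ (by fun_prop)]
        dsimp only
        rw [setLIntegral_const, Measure.volume_eq_prod, volume_floorVec_preimage_singleton hε,
          mul_comm]
    _ = ENNReal.ofReal ε ^ m * ∫⁻ y in Zs, F (cellMap ε k y) := by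
        rw [← union_sdiff_cancel hZsZ,
          lintegral_union (measurableSet_cellZ.diff hZs) disjoint_sdiff_right, hoff, add_zero]
    _ = (ENNReal.ofReal ε)⁻¹ * ∫⁻ z in cellMap ε k '' Zs, F z := by
        rw [setLIntegral_comp_cellMap hε, ← mul_assoc, pow_succ,
          ENNReal.mul_inv (by simp [hε0]) (by simp), ← mul_assoc,
          ENNReal.mul_inv_cancel (pow_ne_zero _ hε0) (by simp), one_mul]

lemma setLIntegral_unfold {ε : ℝ} {Zs : Set (Em m)} (hε : 0 < ε) (hZs : MeasurableSet Zs)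
    (hZsZ : Zs ⊆ cellZ m) (I : Set (Fin m → ℤ)) {F : Em m → ℝ≥0∞} (hF : Measurable F)
    (hF0 : ∀ k, ∀ y ∈ cellZ m \ Zs, F (cellMap ε k y) = 0) :
    ∫⁻ p in (floorVec ε ⁻¹' I) ×ˢ cellZ m, F (cellMap ε (floorVec ε p.1) p.2)
      = (ENNReal.ofReal ε)⁻¹ * ∫⁻ z in ⋃ k ∈ I, cellMap ε k '' Zs, F z := by
  have hcells :
      (floorVec ε ⁻¹' I) ×ˢ cellZ m = ⋃ k ∈ I, (floorVec ε ⁻¹' {k}) ×ˢ cellZ m := by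
    rw [← iUnion₂_prod_const, biUnion_preimage_singleton]
  have hdisj : I.PairwiseDisjoint fun k => (floorVec ε ⁻¹' {k}) ×ˢ cellZ m :=
    fun k _ k' _ hkk' => (disjoint_singleton.2 hkk').preimage _ |>.set_prod_left _ _
  have hdisj' : I.PairwiseDisjoint fun k => cellMap ε k '' Zs := by
    refine fun k _ k' _ hkk' => disjoint_left.2 ?_
    rintro _ ⟨y, hy, rfl⟩ ⟨y', hy', h⟩
    exact hkk' (eq_of_cellMap_eq hε (hZsZ hy') (hZsZ hy) h).1.symm
  rw [hcells, lintegral_biUnion I.to_countable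
      (fun k _ => (measurable_floorVec ε (measurableSet_singleton k)).prod measurableSet_cellZ)
      hdisj,
    lintegral_biUnion I.to_countable
      (fun k _ => (measurableEmbedding_cellMap hε.ne' k).measurableSet_image.2 hZs) hdisj',
    ← ENNReal.tsum_mul_left]
  exact tsum_congr fun k => setLIntegral_unfold_cell hε hZs hZsZ k hF (hF0 k)

lemma setLIntegral_unfold_le {ε : ℝ} {Zs : Set (Em m)} (hε : 0 < ε) (hZs : MeasurableSet Zs)
    (hZsZ : Zs ⊆ cellZ m) {Sig A : Set (Fin m → ℝ)} (hA : A ⊆ floorVec ε ⁻¹' cellIdx ε Sig)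
    (J : Set ℝ) {g : ℝ × Em m → ℝ≥0∞} (hg : Measurable g)
    (hg0 : ∀ t k, ∀ y ∈ cellZ m \ Zs, g (t, cellMap ε k y) = 0) :
    ∫⁻ r in J ×ˢ (A ×ˢ cellZ m), g (r.1, cellMap ε (floorVec ε r.2.1) r.2.2)
      ≤ (ENNReal.ofReal ε)⁻¹ * ∫⁻ x in J ×ˢ channelArray ε Sig Zs, g x := by
  calc ∫⁻ r in J ×ˢ (A ×ˢ cellZ m), g (r.1, cellMap ε (floorVec ε r.2.1) r.2.2)
      ≤ ∫⁻ t in J, ∫⁻ p in A ×ˢ cellZ m, g (t, cellMap ε (floorVec ε p.1) p.2) := by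
        rw [Measure.volume_eq_prod ℝ, ← Measure.prod_restrict]
        exact lintegral_prod_le _
    _ ≤ ∫⁻ t in J, ∫⁻ p in (floorVec ε ⁻¹' cellIdx ε Sig) ×ˢ cellZ m,
          g (t, cellMap ε (floorVec ε p.1) p.2) :=
        lintegral_mono fun t => lintegral_mono_set (prod_mono hA subset_rfl)
    _ = ∫⁻ t in J, (ENNReal.ofReal ε)⁻¹ * ∫⁻ z in channelArray ε Sig Zs, g (t, z) :=
        lintegral_congr fun t =>
          setLIntegral_unfold hε hZs hZsZ _ (hg.comp measurable_prodMk_left) (hg0 t)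
    _ = (ENNReal.ofReal ε)⁻¹ * ∫⁻ x in J ×ˢ channelArray ε Sig Zs, g x := by
        rw [lintegral_const_mul' _ _ (by simpa using hε), Measure.volume_eq_prod ℝ (Em m),
          setLIntegral_prod _ hg.aemeasurable]

lemma setLIntegral_unfoldOp_shift_sub_le (ε : ℝ) (ξ : Fin m → ℝ) {φ : ℝ × Em m → ℝ}
    (hφ : Measurable φ) (D : Set (ℝ × ((Fin m → ℝ) × Em m))) :
    ∫⁻ r in D, ENNReal.ofReal
        ((unfoldOp ε φ (r.1, ((fun i => r.2.1 i + ξ i), r.2.2)) - unfoldOp ε φ r) ^ 2)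
      ≤ ∑ jb : Fin m → Bool,
          ∫⁻ r in D, ENNReal.ofReal (unfoldOp ε (shiftDiff ε (shiftIdx ε ξ jb) φ) r ^ 2) := by
  rw [← lintegral_finsetSum _ fun jb _ => by
    have := measurable_unfoldOp ε (measurable_shiftDiff ε (shiftIdx ε ξ jb) hφ)
    fun_prop]
  refine lintegral_mono fun r => ?_
  rw [unfoldOp_shift_sub]
  exact Finset.single_le_sum (f := fun jb =>
    ENNReal.ofReal (unfoldOp ε (shiftDiff ε (shiftIdx ε ξ jb) φ) r ^ 2))
    (fun _ _ => zero_le) (Finset.mem_univ _)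

end

theorem shift_estimate_unfolded_general
    (m : ℕ) (T : ℝ)
    (Sig : Set (Fin m → ℝ))
    (Zs : Set (Em m)) (hZsOpen : IsOpen Zs) (hZsSub : Zs ⊆ cellZ m)
    (h : ℝ) (hh : 0 < h) (ξ : Fin m → ℝ) :
    ∃ ε₀ > (0:ℝ), ∀ ε : ℝ, admissibleEps ε → ε < ε₀ →
      ∀ φ : ℝ × Em m → ℝ, Measurable φ →
        (∀ x, x ∉ (Ioo 0 T) ×ˢ channelArray ε Sig Zs → φ x = 0) →
        (∫⁻ r in (Ioo 0 T) ×ˢ ((sigmaInner Sig (2*h)) ×ˢ cellZ m),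
            ENNReal.ofReal ((unfoldOp ε φ (r.1, ((fun i => r.2.1 i + ξ i), r.2.2))
              - unfoldOp ε φ r)^2))
          ≤ ENNReal.ofReal (1/ε) *
              ∑ jb : Fin m → Bool,
                ∫⁻ x in (Ioo 0 T) ×ˢ hatChannel ε Sig Zs h,
                  ENNReal.ofReal
                    ((shiftDiff ε (fun i => (if jb i then 1 else 0) + ⌊ξ i / ε⌋) φ x)^2) := by
  refine ⟨h, hh, fun ε ⟨hε, _⟩ hεh φ hφ hφ0 => ?_⟩
  have hφ0' : ∀ t z, z ∉ channelArray ε Sig Zs → φ (t, z) = 0 :=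
    fun t z hz => hφ0 _ fun hmem => hz hmem.2
  have hcells : sigmaInner Sig (2 * h) ⊆ floorVec ε ⁻¹' cellIdx ε (sigmaInner Sig h) :=
    sigmaInner_subset_preimage_cellIdx hε hh.le (by linarith) Sig
  calc _ ≤ _ := setLIntegral_unfoldOp_shift_sub_le ε ξ hφ _
    _ ≤ ∑ jb : Fin m → Bool, (ENNReal.ofReal ε)⁻¹ *
          ∫⁻ x in (Ioo 0 T) ×ˢ hatChannel ε Sig Zs h,
            ENNReal.ofReal (shiftDiff ε (shiftIdx ε ξ jb) φ x ^ 2) :=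
      Finset.sum_le_sum fun jb _ =>
        setLIntegral_unfold_le hε hZsOpen.measurableSet hZsSub hcells _
          (by have := measurable_shiftDiff ε (shiftIdx ε ξ jb) hφ; fun_prop)
          fun t k y hy => by rw [shiftDiff_cellMap_eq_zero hε hZsSub hφ0' _ _ t hy]; simp
    _ = _ := by rw [← Finset.mul_sum, one_div, ENNReal.ofReal_inv_of_pos hε]; rfl

/-- shift estimate for the unfolded sequence: for `φ_ε` extended by
zero, `0 < h`, `|ξ̄| < h` and `ε` small enough,
`‖𝒯_ε φ_ε(·,·+ξ̄,·) - 𝒯_ε φ_ε‖²_{L²((0,T)×Σ_{2h}×Z)}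
  ≤ (1/ε) ∑_{j̄∈{0,1}^{n-1}} ‖δ_l φ_ε‖²_{L²((0,T)×Ω̂^M_{*,ε,h})}` with
`l = j̄ + [ξ̄/ε]`. -/
theorem shift_estimate_unfolded
    (m : ℕ) (T : ℝ) (hT : 0 < T)
    (Sig : Set (Fin m → ℝ)) (hSigOpen : IsOpen Sig) (hSigBdd : Bornology.IsBounded Sig)
    (Zs : Set (Em m)) (hZsOpen : IsOpen Zs) (hZsSub : Zs ⊆ cellZ m)
    (h : ℝ) (hh : 0 < h) (ξ : Fin m → ℝ) (hξ : ‖ξ‖ < h) :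
    ∃ ε₀ > (0:ℝ), ∀ ε : ℝ, admissibleEps ε → ε < ε₀ →
      ∀ φ : ℝ × Em m → ℝ, Measurable φ →
        (∀ x, x ∉ (Ioo 0 T) ×ˢ channelArray ε Sig Zs → φ x = 0) →
        (∫⁻ r in (Ioo 0 T) ×ˢ ((sigmaInner Sig (2*h)) ×ˢ cellZ m),
            ENNReal.ofReal ((unfoldOp ε φ (r.1, ((fun i => r.2.1 i + ξ i), r.2.2))
              - unfoldOp ε φ r)^2))
          ≤ ENNReal.ofReal (1/ε) *
              ∑ jb : Fin m → Bool,
                ∫⁻ x in (Ioo 0 T) ×ˢ hatChannel ε Sig Zs h,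
                  ENNReal.ofReal
                    ((shiftDiff ε (fun i => (if jb i then 1 else 0) + ⌊ξ i / ε⌋) φ x)^2) :=
  shift_estimate_unfolded_general m T Sig Zs hZsOpen hZsSub h hh ξ
end
end
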